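/- arXiv:1512.02025 — 3 statements merged into one kernel-verified Lean document; each statement's English description precedes it below -/
import Mathlib

section
/- Let a ∈ ℝ, let p ≥ 1, and let r₁, …, r_p be distinct positive real numbers that are linearly independent over ℚ. Let P be a nonzero real polynomial in p variables with zero constant term. Then the function Q : ℝ → ℝ defined by Q(x) = P(e^{r₁x} + a, …, e^{r_px} + a) satisfies |Q(x)| → +∞ as x → +∞; in particular, Q is not identically zero. -/
open Filter MvPolynomial

theorem statement_0 (a : ℝ) (p : ℕ) (hp : 1 ≤ p) (r : Fin p → ℝ)
    (hr_inj : Function.Injective r) (hr_pos : ∀ i, 0 < r i)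
    (hr_li : LinearIndependent ℚ r)
    (P : MvPolynomial (Fin p) ℝ) (hP : P ≠ 0)
    (hP0 : MvPolynomial.eval (0 : Fin p → ℝ) P = 0)
    (Q : ℝ → ℝ)
    (hQ : ∀ x : ℝ, Q x = MvPolynomial.eval (fun i => Real.exp (r i * x) + a) P) :
    Tendsto (fun x => |Q x|) atTop atTop ∧ Q ≠ 0 := by
  classical
  set w : (Fin p →₀ ℕ) → ℝ := fun d => ∑ i, (d i : ℝ) * r i with hw
  -- injectivity of the weight map
  have hw_inj : Function.Injective w := by
    intro d d' hdd
    have hli := Fintype.linearIndependent_iff.mp hr_li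
      (fun i => (d i : ℚ) - (d' i : ℚ))
    have h0 : ∑ i, ((d i : ℚ) - (d' i : ℚ)) • r i = 0 := by
      have hsub : ∑ i, ((d i : ℝ) - (d' i : ℝ)) * r i = 0 := by
        simp only [sub_mul, Finset.sum_sub_distrib]
        rw [sub_eq_zero]
        exact hdd
      simpa [Rat.smul_def] using hsub
    have hall := hli h0
    ext i
    have hi := hall i
    have : (d i : ℚ) = (d' i : ℚ) := by linarith
    exact_mod_cast this
  -- support nonempty; pick the max weight element
  have hsupp : P.support.Nonempty := by
    rw [Finset.nonempty_iff_ne_empty]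
    intro h
    exact hP (MvPolynomial.support_eq_empty.mp h)
  obtain ⟨d₀, hd₀mem, hd₀max⟩ := P.support.exists_max_image w hsupp
  set w₀ : ℝ := w d₀ with hw₀
  have hc : coeff d₀ P ≠ 0 := (mem_support_iff).mp hd₀mem
  -- d₀ ≠ 0
  have hcoeff0 : coeff 0 P = 0 := by
    rw [eval_zero] at hP0
    rw [← MvPolynomial.constantCoeff_eq]
    simpa using hP0
  have hd₀ne : d₀ ≠ 0 := by
    intro h
    rw [h] at hc
    exact hc hcoeff0
  -- w₀ > 0
  have hw₀pos : 0 < w₀ := by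
    obtain ⟨j, hj⟩ : ∃ j, d₀ j ≠ 0 := by
      by_contra h
      push_neg at h
      exact hd₀ne (Finsupp.ext fun i => h i)
    apply Finset.sum_pos' (fun i _ => mul_nonneg (Nat.cast_nonneg _) (hr_pos i).le)
    refine ⟨j, Finset.mem_univ j, ?_⟩
    have h1 : (1 : ℝ) ≤ (d₀ j : ℝ) := by exact_mod_cast Nat.one_le_iff_ne_zero.mpr hj
    nlinarith [hr_pos j]
  -- key limit: for each d, (∏ i (exp(r i x)+a)^{d i}) * exp(-(w d)*x) → 1
  have hg : ∀ d : Fin p →₀ ℕ, Tendsto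
      (fun x => (∏ i, (Real.exp (r i * x) + a) ^ d i) * Real.exp (-(w d) * x))
      atTop (nhds 1) := by
    intro d
    have heq : ∀ x, (∏ i, (Real.exp (r i * x) + a) ^ d i) * Real.exp (-(w d) * x)
        = ∏ i, (1 + a * Real.exp (-(r i * x))) ^ d i := by
      intro x
      have hexp : Real.exp (-(w d) * x) = ∏ i, (Real.exp (-(r i * x))) ^ d i := by
        simp only [← Real.exp_nat_mul]
        rw [← Real.exp_sum]
        congr 1
        simp only [hw]
        rw [neg_mul, Finset.sum_mul, ← Finset.sum_neg_distrib]
        exact Finset.sum_congr rfl fun i _ => by ring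
      rw [hexp, ← Finset.prod_mul_distrib]
      apply Finset.prod_congr rfl
      intro i _
      rw [← mul_pow]
      congr 1
      rw [add_mul, ← Real.exp_add]
      simp [mul_comm]
    have hlim : Tendsto (fun x => ∏ i, (1 + a * Real.exp (-(r i * x))) ^ d i)
        atTop (nhds (∏ _i : Fin p, (1 : ℝ))) := by
      apply tendsto_finset_prod
      intro i _
      have hmul : Tendsto (fun x : ℝ => r i * x) atTop atTop :=
        Tendsto.const_mul_atTop (hr_pos i) tendsto_id
      have hneg : Tendsto (fun x : ℝ => -(r i * x)) atTop atBot :=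
        tendsto_neg_atTop_atBot.comp hmul
      have h1 : Tendsto (fun x : ℝ => Real.exp (-(r i * x))) atTop (nhds 0) :=
        Real.tendsto_exp_atBot.comp hneg
      have h2 : Tendsto (fun x : ℝ => 1 + a * Real.exp (-(r i * x))) atTop (nhds 1) := by
        have := (tendsto_const_nhds (x := a) (f := atTop (α := ℝ))).mul h1
        simpa using (tendsto_const_nhds (x := (1:ℝ)) (f := atTop (α := ℝ))).add this
      simpa using h2.pow (d i)
    rw [funext heq]
    simpa using hlim
  -- main limit: Q x * exp(-w₀ x) → coeff d₀ P
  have hmain : Tendsto (fun x => Q x * Real.exp (-w₀ * x)) atTop (nhds (coeff d₀ P)) := by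
    have hQsum : ∀ x, Q x * Real.exp (-w₀ * x)
        = ∑ d ∈ P.support, coeff d P *
            ((∏ i, (Real.exp (r i * x) + a) ^ d i) * Real.exp (-(w d) * x))
            * Real.exp ((w d - w₀) * x) := by
      intro x
      rw [hQ x, eval_eq']
      rw [Finset.sum_mul]
      apply Finset.sum_congr rfl
      intro d _
      have hsplit : Real.exp (-w₀ * x) = Real.exp (-(w d) * x) * Real.exp ((w d - w₀) * x) := by
        rw [← Real.exp_add]; congr 1; ring
      rw [hsplit]; ring
    have hlim : Tendsto (fun x => ∑ d ∈ P.support, coeff d P *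
            ((∏ i, (Real.exp (r i * x) + a) ^ d i) * Real.exp (-(w d) * x))
            * Real.exp ((w d - w₀) * x)) atTop
        (nhds (∑ d ∈ P.support, if d = d₀ then coeff d₀ P else 0)) := by
      apply tendsto_finset_sum
      intro d hd
      by_cases hdd : d = d₀
      · subst hdd
        simp only [if_pos rfl, sub_self, zero_mul, Real.exp_zero, mul_one]
        have := (tendsto_const_nhds (x := coeff d P) (f := atTop (α := ℝ))).mul (hg d)
        simpa [hw₀] using this
      · simp only [if_neg hdd]
        have hwlt : w d < w₀ := by
          rcases lt_or_eq_of_le (hd₀max d hd) with h | h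
          · exact h
          · exact absurd (hw_inj h) hdd
        have hneg : Tendsto (fun x : ℝ => (w d - w₀) * x) atTop atBot := by
          apply Tendsto.const_mul_atTop_of_neg ?_ tendsto_id
          linarith
        have hexp0 : Tendsto (fun x : ℝ => Real.exp ((w d - w₀) * x)) atTop (nhds 0) :=
          Real.tendsto_exp_atBot.comp hneg
        have := ((tendsto_const_nhds (x := coeff d P) (f := atTop (α := ℝ))).mul (hg d)).mul hexp0
        simpa using this
    rw [funext hQsum]
    convert hlim using 2
    rw [Finset.sum_ite_eq' P.support d₀ (fun _ => coeff d₀ P)]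
    simp [hd₀mem]
  -- conclude
  have habs : Tendsto (fun x => |Q x * Real.exp (-w₀ * x)|) atTop (nhds |coeff d₀ P|) :=
    hmain.abs
  have hexp_top : Tendsto (fun x : ℝ => Real.exp (w₀ * x)) atTop atTop :=
    Real.tendsto_exp_atTop.comp (Tendsto.const_mul_atTop hw₀pos tendsto_id)
  have htop : Tendsto (fun x => |Q x|) atTop atTop := by
    have h := Filter.Tendsto.pos_mul_atTop (abs_pos.mpr hc) habs hexp_top
    apply h.congr
    intro x
    rw [abs_mul, abs_of_pos (Real.exp_pos _), mul_assoc, ← Real.exp_add]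
    simp
  refine ⟨htop, ?_⟩
  intro hQ0
  have := (htop.eventually_ge_atTop 1).exists
  obtain ⟨x, hx⟩ := this
  rw [hQ0] at hx
  simp at hx
  linarith
end

section
/- Let a ∈ ℝ, let Ω be a nonempty set, and let f : Ω → ℝ be a function such that the image f(Ω) has an accumulation point in ℝ. Let r₁, …, r_p be distinct positive real numbers that are linearly independent over ℚ, and let P be a nonzero real polynomial in p variables with zero constant term. Then the function P(E_{r₁} ∘ f, …, E_{r_p} ∘ f) : Ω → ℝ is not identically zero, where E_r(x) := e^{rx} + a. -/
open Filter MvPolynomial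
open scoped Topology

theorem statement_1 (a : ℝ) (Ω : Type*) [Nonempty Ω] (f : Ω → ℝ)
    (hacc : ∃ x : ℝ, AccPt x (Filter.principal (Set.range f)))
    (p : ℕ) (hp : 1 ≤ p) (r : Fin p → ℝ)
    (hr_inj : Function.Injective r) (hr_pos : ∀ i, 0 < r i)
    (hr_li : LinearIndependent ℚ r)
    (P : MvPolynomial (Fin p) ℝ) (hP : P ≠ 0)
    (hP0 : MvPolynomial.eval (0 : Fin p → ℝ) P = 0) :
    (fun ω => MvPolynomial.eval (fun i => Real.exp (r i * f ω) + a) P) ≠ 0 := by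
  intro hzero
  obtain ⟨x₀, hx₀⟩ := hacc
  set g : ℝ → ℝ := fun x => MvPolynomial.eval (fun i => Real.exp (r i * x) + a) P with hg
  have hgf : ∀ ω, g (f ω) = 0 := fun ω => congrFun hzero ω
  -- the exponent map
  set μ : (Fin p →₀ ℕ) → ℝ := fun d => ∑ i, (d i : ℝ) * r i with hμdef
  have hμinj : Function.Injective μ := by
    intro d e h
    have key : ∀ i, ((d i : ℚ) - (e i : ℚ)) = 0 := by
      refine Fintype.linearIndependent_iff.mp hr_li _ ?_
      have h' : ∑ i, ((d i : ℝ) - (e i : ℝ)) * r i = 0 := by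
        simp only [sub_mul, Finset.sum_sub_distrib]
        have := sub_eq_zero.mpr h
        simpa [hμdef] using this
      calc ∑ i, ((d i : ℚ) - (e i : ℚ)) • r i
          = ∑ i, ((d i : ℝ) - (e i : ℝ)) * r i := by
            refine Finset.sum_congr rfl fun i _ => ?_
            rw [Rat.smul_def]
            push_cast
            ring
        _ = 0 := h'
    ext i
    have h1 := key i
    have h2 : (d i : ℚ) = e i := by linarith
    exact_mod_cast h2
  -- analyticity of g
  have han : AnalyticOnNhd ℝ g Set.univ := by
    intro x _
    have : AnalyticAt ℝ (fun x : ℝ =>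
        ∑ d ∈ P.support, MvPolynomial.coeff d P * ∏ i, (Real.exp (r i * x) + a) ^ d i) x := by
      apply Finset.analyticAt_fun_sum
      intro d _
      apply AnalyticAt.mul analyticAt_const
      apply Finset.analyticAt_fun_prod
      intro i _
      apply AnalyticAt.pow
      exact (analyticAt_rexp.comp (analyticAt_const.mul analyticAt_id)).add analyticAt_const
    refine this.congr ?_
    filter_upwards with y
    exact (MvPolynomial.eval_eq' (fun i => Real.exp (r i * y) + a) P).symm
  -- g vanishes frequently near x₀, hence everywhere
  have hfreq : ∃ᶠ z in 𝓝[≠] x₀, g z = 0 := by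
    have h1 := accPt_iff_frequently.mp hx₀
    rw [frequently_nhdsWithin_iff]
    refine h1.mono ?_
    rintro z ⟨hz1, y, rfl⟩
    exact ⟨hgf y, hz1⟩
  have hg0 : ∀ x : ℝ, g x = 0 := fun x =>
    han.eqOn_zero_of_preconnected_of_frequently_eq_zero isPreconnected_univ
      (Set.mem_univ x₀) hfreq (Set.mem_univ x)
  -- the dominant term
  obtain ⟨d₀, hd₀mem, hd₀max⟩ :=
    P.support.exists_max_image μ (MvPolynomial.support_nonempty.mpr hP)
  have hc₀ : MvPolynomial.coeff d₀ P ≠ 0 := MvPolynomial.mem_support_iff.mp hd₀mem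
  -- small helper
  have hexp0 : ∀ c : ℝ, c < 0 → Tendsto (fun x => Real.exp (c * x)) atTop (𝓝 0) := by
    intro c hc
    apply Real.tendsto_exp_atBot.comp
    exact tendsto_id.const_mul_atTop_of_neg hc
  have hA : ∀ d : Fin p →₀ ℕ,
      Tendsto (fun x => ∏ i, (1 + a * Real.exp (-(r i) * x)) ^ d i) atTop (𝓝 1) := by
    intro d
    have : Tendsto (fun x => ∏ i, (1 + a * Real.exp (-(r i) * x)) ^ d i) atTop
        (𝓝 (∏ i : Fin p, (1 : ℝ) ^ d i)) := by
      apply tendsto_finset_prod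
      intro i _
      have h1 : Tendsto (fun x => 1 + a * Real.exp (-(r i) * x)) atTop (𝓝 (1 + a * 0)) :=
        tendsto_const_nhds.add (tendsto_const_nhds.mul (hexp0 _ (neg_neg_iff_pos.mpr (hr_pos i))))
      simpa using h1.pow (d i)
    simpa using this
  -- the rewritten form of g x * exp (-(μ d₀) x)
  have hre : ∀ x, g x * Real.exp (-(μ d₀) * x)
      = ∑ d ∈ P.support, MvPolynomial.coeff d P
          * (∏ i, (1 + a * Real.exp (-(r i) * x)) ^ d i)
          * Real.exp ((μ d - μ d₀) * x) := by
    intro x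
    simp only [hg]
    rw [MvPolynomial.eval_eq', Finset.sum_mul]
    refine Finset.sum_congr rfl fun d _ => ?_
    have key : ∀ i : Fin p, (Real.exp (r i * x) + a) ^ d i
        = (1 + a * Real.exp (-(r i) * x)) ^ d i * Real.exp ((d i : ℝ) * r i * x) := by
      intro i
      have e1 : Real.exp ((d i : ℝ) * r i * x) = (Real.exp (r i * x)) ^ (d i) := by
        rw [← Real.exp_nat_mul]; ring_nf
      rw [e1, ← mul_pow]
      congr 1
      rw [add_mul, one_mul, mul_assoc, ← Real.exp_add]
      ring_nf
      simp [Real.exp_zero]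
    have e2 : (∏ i, (Real.exp (r i * x) + a) ^ d i)
        = (∏ i, (1 + a * Real.exp (-(r i) * x)) ^ d i) * Real.exp (μ d * x) := by
      rw [hμdef]
      simp only [key]
      rw [Finset.prod_mul_distrib, ← Real.exp_sum, Finset.sum_mul]
    rw [e2]
    rw [mul_assoc, mul_assoc, mul_assoc]
    congr 1
    congr 1
    rw [← Real.exp_add]
    congr 1
    ring
  -- the limit
  have hlim : Tendsto (fun x => g x * Real.exp (-(μ d₀) * x)) atTop
      (𝓝 (MvPolynomial.coeff d₀ P)) := by
    have hsum : (MvPolynomial.coeff d₀ P)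
        = ∑ d ∈ P.support, if d = d₀ then MvPolynomial.coeff d₀ P else 0 := by
      rw [Finset.sum_ite_eq' P.support d₀ (fun _ => MvPolynomial.coeff d₀ P), if_pos hd₀mem]
    rw [hsum]
    rw [show (fun x => g x * Real.exp (-(μ d₀) * x)) = fun x =>
      ∑ d ∈ P.support, MvPolynomial.coeff d P
          * (∏ i, (1 + a * Real.exp (-(r i) * x)) ^ d i)
          * Real.exp ((μ d - μ d₀) * x) from funext hre]
    apply tendsto_finset_sum
    intro d hd
    by_cases hdd : d = d₀
    · subst hdd
      simp only [if_pos rfl, sub_self, zero_mul, Real.exp_zero, mul_one]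
      simpa using ((hA d).const_mul (MvPolynomial.coeff d P))
    · have hμlt : μ d - μ d₀ < 0 := by
        have hle : μ d ≤ μ d₀ := hd₀max d hd
        have hne : μ d ≠ μ d₀ := fun hc => hdd (hμinj hc)
        have : μ d < μ d₀ := lt_of_le_of_ne hle hne
        linarith
      simp only [if_neg hdd]
      have := ((hA d).const_mul (MvPolynomial.coeff d P)).mul (hexp0 _ hμlt)
      simpa using this
  -- contradiction
  obtain ⟨x, hx⟩ := (hlim.eventually_ne hc₀).exists
  apply hx
  rw [hg0 x, zero_mul]
end

section
/- Let Z be a subset of ℝ. The following are equivalent: (a) either Z = ℝ or Z has no accumulation point in ℝ; (b) there exists a function f : ℝ → ℝ that is real-analytic at every point of ℝ and satisfies f⁻¹({0}) = Z. -/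
open Filter Topology Set Metric

private lemma weier_ineq (s : Finset ℕ) (u : ℕ → ℝ) (h0 : ∀ i ∈ s, 0 ≤ u i)
    (h1 : ∀ i ∈ s, u i ≤ 1) : 1 - ∑ i ∈ s, u i ≤ ∏ i ∈ s, (1 - u i) := by
  classical
  induction s using Finset.cons_induction with
  | empty => simp
  | cons a s ha ih =>
    rw [Finset.prod_cons, Finset.sum_cons]
    have h0a := h0 a (Finset.mem_cons_self a s)
    have h1a := h1 a (Finset.mem_cons_self a s)
    have ihs := ih (fun i hi => h0 i (Finset.mem_cons_of_mem hi))
      (fun i hi => h1 i (Finset.mem_cons_of_mem hi))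
    have hsum : 0 ≤ ∑ i ∈ s, u i :=
      Finset.sum_nonneg fun i hi => h0 i (Finset.mem_cons_of_mem hi)
    nlinarith [ihs]

/-- the weight sequence -/
private noncomputable def cc (a : ℕ → ℝ) (k : ℕ) : ℝ := 8 * ((k : ℝ) + 1) / ((a k) ^ 2 + 1)

private lemma cc_pos (a : ℕ → ℝ) (k : ℕ) : 0 < cc a k := by
  unfold cc; positivity

private lemma cc_le (a : ℕ → ℝ) (k : ℕ) : cc a k ≤ 8 * ((k : ℝ) + 1) := by
  unfold cc
  rw [div_le_iff₀ (by positivity)]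
  nlinarith [sq_nonneg (a k), sq_nonneg ((k:ℝ)+1)]

/-- one factor of the product -/
private noncomputable def gg (a : ℕ → ℝ) (k : ℕ) (z : ℂ) : ℂ :=
  1 - Complex.exp (-(cc a k : ℂ) * (z - (a k : ℂ)) ^ 2)

/-- partial products -/
private noncomputable def PP (a : ℕ → ℝ) (N : ℕ) (z : ℂ) : ℂ :=
  ∏ k ∈ Finset.range N, gg a k z

/-- the limit function -/
private noncomputable def FF (a : ℕ → ℝ) (z : ℂ) : ℂ :=
  1 + ∑' n, PP a n z * (gg a n z - 1)

/-- the majorant -/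
private noncomputable def MM (a : ℕ → ℝ) (R : ℝ) (k : ℕ) : ℝ :=
  if 16 * R ^ 2 ≤ (a k) ^ 2 then Real.exp (-(k : ℝ)) else Real.exp (8 * ((k : ℝ) + 1) * R ^ 2)

private lemma MM_pos (a : ℕ → ℝ) (R : ℝ) (k : ℕ) : 0 < MM a R k := by
  unfold MM; split_ifs <;> exact Real.exp_pos _

private lemma norm_gg_sub_one (a : ℕ → ℝ) (k : ℕ) (z : ℂ) :
    ‖gg a k z - 1‖ = Real.exp (-(cc a k) * ((z.re - a k) ^ 2 - z.im ^ 2)) := by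
  have h1 : gg a k z - 1 = -Complex.exp (-(cc a k : ℂ) * (z - (a k : ℂ)) ^ 2) := by
    unfold gg; ring
  rw [h1, norm_neg, Complex.norm_exp]
  congr 1
  simp [Complex.mul_re, Complex.mul_im, Complex.sub_re, Complex.sub_im, pow_two]

private lemma gg_bound (a : ℕ → ℝ) {R : ℝ} (hR : 1 ≤ R) (k : ℕ) {z : ℂ}
    (hz : z ∈ closedBall (0 : ℂ) R) : ‖gg a k z - 1‖ ≤ MM a R k := by
  have hz' : ‖z‖ ≤ R := by
    simpa [Complex.dist_eq] using (mem_closedBall.1 hz)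
  have hre : |z.re| ≤ R := (Complex.abs_re_le_norm z).trans hz'
  have him : |z.im| ≤ R := (Complex.abs_im_le_norm z).trans hz'
  have hre2 : z.re ^ 2 ≤ R ^ 2 := by nlinarith [abs_le.1 hre, abs_nonneg z.re]
  have him2 : z.im ^ 2 ≤ R ^ 2 := by nlinarith [abs_le.1 him, abs_nonneg z.im]
  rw [norm_gg_sub_one]
  unfold MM
  split_ifs with hfar
  · -- far case
    rw [Real.exp_le_exp]
    have hxa : (a k) ^ 2 / 2 ≤ (z.re - a k) ^ 2 := by
      nlinarith [sq_nonneg (a k - 4 * z.re), hre2, hfar, hR]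
    have h16 : (16:ℝ) ≤ (a k) ^ 2 := by nlinarith [hfar, hR]
    have hE : 7 * (a k) ^ 2 / 16 ≤ (z.re - a k) ^ 2 - z.im ^ 2 := by nlinarith [hxa, him2, hfar]
    have h3 : 8 * ((k:ℝ) + 1) * (7 * (a k) ^ 2 / 16)
        ≤ 8 * ((k:ℝ) + 1) * ((z.re - a k) ^ 2 - z.im ^ 2) :=
      mul_le_mul_of_nonneg_left hE (by positivity)
    have h4 : (k:ℝ) * 16 ≤ (k:ℝ) * (a k) ^ 2 :=
      mul_le_mul_of_nonneg_left h16 (Nat.cast_nonneg k)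
    have hkey : (k : ℝ) * ((a k) ^ 2 + 1) ≤ 8 * ((k : ℝ) + 1) * ((z.re - a k) ^ 2 - z.im ^ 2) := by
      nlinarith [h3, h4, sq_nonneg (a k), Nat.cast_nonneg (α := ℝ) k]
    have hc : (k : ℝ) ≤ cc a k * ((z.re - a k) ^ 2 - z.im ^ 2) := by
      unfold cc
      rw [div_mul_eq_mul_div, le_div_iff₀ (by positivity)]
      linarith [hkey]
    linarith
  · -- near case
    rw [Real.exp_le_exp]
    have h1 : -(cc a k) * ((z.re - a k) ^ 2 - z.im ^ 2) ≤ cc a k * z.im ^ 2 := by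
      nlinarith [cc_pos a k, sq_nonneg (z.re - a k)]
    have h2 : cc a k * z.im ^ 2 ≤ 8 * ((k : ℝ) + 1) * R ^ 2 := by
      have := cc_le a k
      nlinarith [cc_pos a k, him2, sq_nonneg z.im, hR]
    linarith

private lemma MM_summable (a : ℕ → ℝ)
    (hfink : ∀ R : ℝ, 1 ≤ R → {k : ℕ | ¬ 16 * R ^ 2 ≤ (a k) ^ 2}.Finite)
    {R : ℝ} (hR : 1 ≤ R) : Summable (MM a R) := by
  have hgeo : Summable (fun k : ℕ => Real.exp (-(k : ℝ))) := by
    have : (fun k : ℕ => Real.exp (-(k : ℝ))) = fun k : ℕ => (Real.exp (-1)) ^ k := by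
      funext k
      rw [← Real.exp_nat_mul]
      norm_num
    rw [this]
    exact summable_geometric_of_lt_one (Real.exp_pos _).le
      (Real.exp_lt_one_iff.2 (by norm_num))
  have hind : Summable ((({k : ℕ | ¬ 16 * R ^ 2 ≤ (a k) ^ 2}) : Set ℕ).indicator
      (fun k => Real.exp (8 * ((k : ℝ) + 1) * R ^ 2))) :=
    summable_of_ne_finset_zero (s := (hfink R hR).toFinset)
      (fun b hb => Set.indicator_of_notMem (by simpa using hb) _)
  refine Summable.of_nonneg_of_le (fun k => (MM_pos a R k).le) (fun k => ?_) (hgeo.add hind)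
  unfold MM
  split_ifs with h
  · have h2 : (0:ℝ) ≤ (({k : ℕ | ¬ 16 * R ^ 2 ≤ (a k) ^ 2}) : Set ℕ).indicator
        (fun k => Real.exp (8 * ((k : ℝ) + 1) * R ^ 2)) k :=
      Set.indicator_nonneg (fun i _ => (Real.exp_pos _).le) k
    linarith
  · rw [Set.indicator_of_mem (by simpa using h)]
    linarith [Real.exp_pos (-(k:ℝ))]

private lemma gg_differentiable (a : ℕ → ℝ) (k : ℕ) : Differentiable ℂ (gg a k) := by
  unfold gg
  apply Differentiable.sub (differentiable_const _)
  apply Differentiable.cexp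
  apply Differentiable.const_mul
  exact (differentiable_id.sub_const _).pow 2

private lemma PP_differentiable (a : ℕ → ℝ) (N : ℕ) : Differentiable ℂ (PP a N) := by
  induction N with
  | zero =>
    have h : PP a 0 = fun _ => (1:ℂ) := by funext z; simp [PP]
    rw [h]; exact differentiable_const _
  | succ n ih =>
    have : PP a (n+1) = fun z => PP a n z * gg a n z := by
      funext z; simp [PP, Finset.prod_range_succ]
    rw [this]
    exact ih.mul (gg_differentiable a n)

private lemma PP_eq_one_add (a : ℕ → ℝ) (N : ℕ) (z : ℂ) :
    PP a N z = 1 + ∑ n ∈ Finset.range N, PP a n z * (gg a n z - 1) := by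
  have h1 : ∀ n, PP a n z * (gg a n z - 1) = PP a (n+1) z - PP a n z := by
    intro n
    have h2 : PP a (n+1) z = PP a n z * gg a n z := by
      rw [PP, PP, Finset.prod_range_succ]
    rw [h2]; ring
  simp only [h1]
  rw [Finset.sum_range_sub (f := fun n => PP a n z)]
  have h0 : PP a 0 z = 1 := by simp [PP]
  rw [h0]; ring

private lemma PP_norm_le (a : ℕ → ℝ)
    (hfink : ∀ R : ℝ, 1 ≤ R → {k : ℕ | ¬ 16 * R ^ 2 ≤ (a k) ^ 2}.Finite)
    {R : ℝ} (hR : 1 ≤ R) (N : ℕ) {z : ℂ} (hz : z ∈ closedBall (0 : ℂ) R) :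
    ‖PP a N z‖ ≤ Real.exp (∑' k, MM a R k) := by
  have hsum := MM_summable a hfink hR
  unfold PP
  calc ‖∏ k ∈ Finset.range N, gg a k z‖ ≤ ∏ k ∈ Finset.range N, ‖gg a k z‖ :=
      Finset.norm_prod_le _ _
    _ ≤ ∏ k ∈ Finset.range N, (1 + MM a R k) := by
        apply Finset.prod_le_prod (fun k _ => norm_nonneg _)
        intro k _
        calc ‖gg a k z‖ = ‖1 + (gg a k z - 1)‖ := by ring_nf
          _ ≤ ‖(1:ℂ)‖ + ‖gg a k z - 1‖ := norm_add_le _ _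
          _ ≤ 1 + MM a R k := by
              simp only [norm_one]
              linarith [gg_bound a hR k hz]
    _ ≤ ∏ k ∈ Finset.range N, Real.exp (MM a R k) := by
        apply Finset.prod_le_prod (fun k _ => by linarith [MM_pos a R k])
        intro k _
        linarith [Real.add_one_le_exp (MM a R k)]
    _ = Real.exp (∑ k ∈ Finset.range N, MM a R k) := (Real.exp_sum _ _).symm
    _ ≤ Real.exp (∑' k, MM a R k) := by
        rw [Real.exp_le_exp]
        exact hsum.sum_le_tsum _ (fun k _ => (MM_pos a R k).le)

private lemma PP_tendstoUniformlyOn (a : ℕ → ℝ)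
    (hfink : ∀ R : ℝ, 1 ≤ R → {k : ℕ | ¬ 16 * R ^ 2 ≤ (a k) ^ 2}.Finite)
    {R : ℝ} (hR : 1 ≤ R) :
    TendstoUniformlyOn (PP a) (FF a) atTop (closedBall (0 : ℂ) R) := by
  have hsum := MM_summable a hfink hR
  set C := Real.exp (∑' k, MM a R k) with hC
  have hCpos : 0 < C := Real.exp_pos _
  have huc : TendstoUniformlyOn
      (fun N z => ∑ n ∈ Finset.range N, PP a n z * (gg a n z - 1))
      (fun z => ∑' n, PP a n z * (gg a n z - 1)) atTop (closedBall (0 : ℂ) R) := by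
    apply tendstoUniformlyOn_tsum_nat (u := fun n => C * MM a R n) (hsum.mul_left C)
    intro n z hz
    rw [norm_mul]
    exact mul_le_mul (PP_norm_le a hfink hR n hz) (gg_bound a hR n hz)
      (norm_nonneg _) hCpos.le
  rw [Metric.tendstoUniformlyOn_iff] at huc ⊢
  intro ε hε
  filter_upwards [huc ε hε] with N hN z hz
  have := hN z hz
  rw [PP_eq_one_add]
  unfold FF
  simpa [dist_eq_norm] using this

private lemma FF_analytic (a : ℕ → ℝ)
    (hfink : ∀ R : ℝ, 1 ≤ R → {k : ℕ | ¬ 16 * R ^ 2 ≤ (a k) ^ 2}.Finite) (z : ℂ) :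
    AnalyticAt ℂ (FF a) z := by
  have hloc : TendstoLocallyUniformlyOn (PP a) (FF a) atTop Set.univ := by
    rw [tendstoLocallyUniformlyOn_univ]
    intro u hu x
    refine ⟨Metric.ball 0 (‖x‖ + 1), Metric.isOpen_ball.mem_nhds (by
      simp [Complex.dist_eq]), ?_⟩
    have h1 : (1:ℝ) ≤ ‖x‖ + 1 := by linarith [norm_nonneg x]
    filter_upwards [PP_tendstoUniformlyOn a hfink h1 u hu] with N hN y hy
    exact hN y (Metric.ball_subset_closedBall hy)
  have hdiff : DifferentiableOn ℂ (FF a) Set.univ :=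
    hloc.differentiableOn (Eventually.of_forall fun N => (PP_differentiable a N).differentiableOn)
      isOpen_univ
  exact hdiff.analyticAt (Filter.univ_mem)

set_option maxHeartbeats 2000000 in
theorem statement_2 (Z : Set ℝ) :
    (Z = Set.univ ∨ ∀ x : ℝ, ¬ AccPt x (Filter.principal Z)) ↔
    (∃ f : ℝ → ℝ, (∀ x : ℝ, AnalyticAt ℝ f x) ∧ f ⁻¹' {0} = Z) := by
  constructor
  · rintro (rfl | hacc)
    · exact ⟨0, fun x => analyticAt_const, by simp⟩
    · -- construction of the analytic function
      have hfin : ∀ R : ℝ, (Z ∩ Set.Icc (-R) R).Finite := by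
        intro R
        by_contra h
        obtain ⟨x, -, hx⟩ := Set.Infinite.exists_accPt_of_subset_isCompact h
          isCompact_Icc Set.inter_subset_right
        exact hacc x (hx.mono (principal_mono.2 Set.inter_subset_left))
      rcases Z.finite_or_infinite with hZfin | hZinf
      · refine ⟨fun x => ∏ b ∈ hZfin.toFinset, (x - b), fun x => ?_, ?_⟩
        · exact Finset.analyticAt_fun_prod _ (fun b _ => (analyticAt_id.sub analyticAt_const))
        · ext x
          simp only [Set.mem_preimage, Set.mem_singleton_iff, Finset.prod_eq_zero_iff,
            sub_eq_zero, Set.Finite.mem_toFinset]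
          constructor
          · rintro ⟨b, hb, rfl⟩; exact hb
          · intro hx; exact ⟨x, hx, rfl⟩
      · -- infinite case
        have hcount : Z.Countable := by
          have hsub : Z ⊆ ⋃ n : ℕ, (Z ∩ Set.Icc (-(n:ℝ)) n) := by
            intro x hx
            have h1 : |x| ≤ ((⌈|x|⌉₊ : ℕ) : ℝ) := Nat.le_ceil _
            have h2 := abs_le.1 h1
            exact Set.mem_iUnion.2 ⟨⌈|x|⌉₊, hx, h2.1, h2.2⟩
          exact Set.Countable.mono hsub (Set.countable_iUnion (fun n => (hfin n).countable))
        obtain ⟨a, ha_inj, ha_range⟩ : ∃ a : ℕ → ℝ, Function.Injective a ∧ Set.range a = Z := by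
          haveI := hcount.to_subtype
          haveI := hZinf.to_subtype
          obtain ⟨D⟩ := nonempty_denumerable (↥Z)
          refine ⟨fun n => ((Denumerable.eqv ↥Z).symm n : ℝ), ?_, ?_⟩
          · exact fun m n h => (Denumerable.eqv ↥Z).symm.injective (Subtype.ext h)
          · ext y
            constructor
            · rintro ⟨n, rfl⟩
              exact ((Denumerable.eqv ↥Z).symm n).2
            · intro hy
              exact ⟨(Denumerable.eqv ↥Z) ⟨y, hy⟩, by simp⟩
        have ha_mem : ∀ n, a n ∈ Z := fun n => ha_range ▸ Set.mem_range_self n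
        have ha_surj : ∀ x ∈ Z, ∃ n, a n = x := by
          intro x hx
          rw [← ha_range] at hx
          exact hx
        have hfink : ∀ R : ℝ, 1 ≤ R → {k : ℕ | ¬ 16 * R ^ 2 ≤ (a k) ^ 2}.Finite := by
          intro R hR
          have hss : {k : ℕ | ¬ 16 * R ^ 2 ≤ (a k) ^ 2} ⊆
              a ⁻¹' (Z ∩ Set.Icc (-(4*R)) (4*R)) := by
            intro k hk
            simp only [Set.mem_setOf_eq, not_le] at hk
            refine ⟨ha_mem k, ?_, ?_⟩
            · nlinarith [sq_nonneg (a k + 4*R), hk, hR]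
            · nlinarith [sq_nonneg (a k - 4*R), hk, hR]
          exact ((hfin (4*R)).preimage (ha_inj.injOn)).subset hss
        refine ⟨fun x => (FF a (x:ℂ)).re, fun x => ?_, ?_⟩
        · -- analyticity
          have h1 : AnalyticAt ℝ (FF a) ((x:ℂ)) := (FF_analytic a hfink (x:ℂ)).restrictScalars
          have h2 : AnalyticAt ℝ (fun t : ℝ => FF a (t:ℂ)) x :=
            h1.comp (Complex.ofRealCLM.analyticAt x)
          have hre' : AnalyticAt ℝ (fun z : ℂ => z.re) (FF a (x:ℂ)) :=
            Complex.reCLM.analyticAt _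
          have h3 : AnalyticAt ℝ ((fun z : ℂ => z.re) ∘ (fun t : ℝ => FF a (t:ℂ))) x :=
            AnalyticAt.comp (f := fun t : ℝ => FF a (t:ℂ)) hre' h2
          exact h3
        · -- zero set
          have hlim : ∀ x : ℝ, Tendsto (fun N => PP a N (x:ℂ)) atTop (𝓝 (FF a (x:ℂ))) := by
            intro x
            have h1 : (1:ℝ) ≤ ‖(x:ℂ)‖ + 1 := by linarith [norm_nonneg (x:ℂ)]
            refine (PP_tendstoUniformlyOn a hfink h1).tendsto_at ?_
            rw [mem_closedBall]
            have : dist (x:ℂ) 0 = ‖(x:ℂ)‖ := dist_zero_right _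
            rw [this]
            linarith [norm_nonneg (x:ℂ)]
          have hcast : ∀ N (x:ℝ), PP a N (x:ℂ) =
              ((∏ k ∈ Finset.range N, (1 - Real.exp (-(cc a k) * (x - a k)^2)) : ℝ) : ℂ) := by
            intro N x
            rw [Complex.ofReal_prod]
            unfold PP gg
            refine Finset.prod_congr rfl fun k _ => ?_
            rw [Complex.ofReal_sub, Complex.ofReal_one, Complex.ofReal_exp]
            congr 1
            push_cast
            ring
          have hre : ∀ x : ℝ, Tendsto
              (fun N => ∏ k ∈ Finset.range N, (1 - Real.exp (-(cc a k) * (x - a k)^2)))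
              atTop (𝓝 ((FF a (x:ℂ)).re)) := by
            intro x
            have h1 := (Complex.continuous_re.tendsto (FF a (x:ℂ))).comp (hlim x)
            have h2 : ((fun z : ℂ => z.re) ∘ (fun N => PP a N (x:ℂ))) =
                fun N => ∏ k ∈ Finset.range N, (1 - Real.exp (-(cc a k) * (x - a k)^2)) := by
              funext N
              simp only [Function.comp_apply, hcast]
              exact Complex.ofReal_re _
            rwa [h2] at h1
          ext x
          simp only [Set.mem_preimage, Set.mem_singleton_iff]
          by_cases hxZ : x ∈ Z
          · obtain ⟨j, hj⟩ := ha_surj x hxZ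
            have hzero : ∀ N, j + 1 ≤ N →
                (∏ k ∈ Finset.range N, (1 - Real.exp (-(cc a k) * (x - a k)^2))) = 0 := by
              intro N hN
              apply Finset.prod_eq_zero (Finset.mem_range.2 (by omega : j < N))
              rw [hj, sub_self]
              norm_num
            have h0 : Tendsto
                (fun N => ∏ k ∈ Finset.range N, (1 - Real.exp (-(cc a k) * (x - a k)^2)))
                atTop (𝓝 0) := by
              apply Tendsto.congr' _ tendsto_const_nhds
              filter_upwards [eventually_ge_atTop (j+1)] with N hN
              exact (hzero N hN).symm
            have hFz := tendsto_nhds_unique (hre x) h0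
            simp [hFz, hxZ]
          · -- x is not in Z : the function does not vanish
            have hne : ∀ k, x ≠ a k := fun k h => hxZ (h ▸ ha_mem k)
            have hee_pos : ∀ k, 0 < Real.exp (-(cc a k) * (x - a k)^2) :=
              fun k => Real.exp_pos _
            have hee_lt1 : ∀ k, Real.exp (-(cc a k) * (x - a k)^2) < 1 := by
              intro k
              apply Real.exp_lt_one_iff.2
              have hd : x - a k ≠ 0 := sub_ne_zero.2 (hne k)
              have h1 : 0 < (x - a k)^2 := by positivity
              nlinarith [cc_pos a k]
            have hR1 : (1:ℝ) ≤ |x| + 1 := by linarith [abs_nonneg x]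
            have hee_le : ∀ k, Real.exp (-(cc a k) * (x - a k)^2) ≤ MM a (|x|+1) k := by
              intro k
              have hzmem : (x:ℂ) ∈ closedBall (0:ℂ) (|x|+1) := by
                rw [mem_closedBall]
                have h3 : dist (x:ℂ) 0 = |x| := by
                  rw [dist_zero_right]
                  simp
                rw [h3]
                linarith
              have h4 := gg_bound a hR1 k hzmem
              rw [norm_gg_sub_one] at h4
              simpa using h4
            have hee_sum : Summable (fun k => Real.exp (-(cc a k) * (x - a k)^2)) :=
              Summable.of_nonneg_of_le (fun k => (hee_pos k).le) hee_le
                (MM_summable a hfink hR1)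
            obtain ⟨K, hK⟩ : ∃ K, ∑' k, Real.exp (-(cc a (k + K)) * (x - a (k + K))^2) < 1/2 := by
              have h5 := tendsto_sum_nat_add (fun k => Real.exp (-(cc a k) * (x - a k)^2))
              exact ((tendsto_order.1 h5).2 (1/2) (by norm_num)).exists
            have hpK_pos : 0 < ∏ k ∈ Finset.range K, (1 - Real.exp (-(cc a k) * (x - a k)^2)) :=
              Finset.prod_pos (fun k _ => by linarith [hee_lt1 k])
            have hlb : ∀ N, K ≤ N →
                (∏ k ∈ Finset.range K, (1 - Real.exp (-(cc a k) * (x - a k)^2))) / 2 ≤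
                ∏ k ∈ Finset.range N, (1 - Real.exp (-(cc a k) * (x - a k)^2)) := by
              intro N hN
              have hsplit := (Finset.prod_range_mul_prod_Ico
                (fun k => (1 - Real.exp (-(cc a k) * (x - a k)^2))) hN).symm
              have htail : 1 - ∑ k ∈ Finset.Ico K N, Real.exp (-(cc a k) * (x - a k)^2) ≤
                  ∏ k ∈ Finset.Ico K N, (1 - Real.exp (-(cc a k) * (x - a k)^2)) :=
                weier_ineq _ _ (fun i _ => (hee_pos i).le) (fun i _ => (hee_lt1 i).le)
              have hsum_le : ∑ k ∈ Finset.Ico K N, Real.exp (-(cc a k) * (x - a k)^2) ≤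
                  ∑' k, Real.exp (-(cc a (k + K)) * (x - a (k + K))^2) := by
                rw [Finset.sum_Ico_eq_sum_range]
                have h6 : ∀ i, Real.exp (-(cc a (K + i)) * (x - a (K + i))^2) =
                    Real.exp (-(cc a (i + K)) * (x - a (i + K))^2) := by
                  intro i; rw [add_comm]
                rw [Finset.sum_congr rfl (fun i _ => h6 i)]
                exact ((summable_nat_add_iff K).2 hee_sum).sum_le_tsum _ (fun i _ => (hee_pos _).le)
              have htail2 : (1:ℝ)/2 ≤
                  ∏ k ∈ Finset.Ico K N, (1 - Real.exp (-(cc a k) * (x - a k)^2)) := by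
                linarith
              rw [hsplit]
              nlinarith [hpK_pos, htail2]
            have hge : (∏ k ∈ Finset.range K, (1 - Real.exp (-(cc a k) * (x - a k)^2))) / 2 ≤
                (FF a (x:ℂ)).re := by
              refine ge_of_tendsto (hre x) ?_
              filter_upwards [eventually_ge_atTop K] with N hN
              exact hlb N hN
            have hne0 : (FF a (x:ℂ)).re ≠ 0 := by
              have : 0 < (FF a (x:ℂ)).re := by linarith
              linarith
            simp [hne0, hxZ]
  · rintro ⟨f, hf, rfl⟩
    by_cases h : ∀ x : ℝ, ¬ AccPt x (Filter.principal (f ⁻¹' {0}))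
    · exact Or.inr h
    · push_neg at h
      obtain ⟨x, hx⟩ := h
      left
      have hfreq : ∃ᶠ z in 𝓝[≠] x, f z = 0 := by
        rw [frequently_nhdsWithin_iff]
        exact (accPt_iff_frequently.1 hx).mono (fun y hy => ⟨hy.2, hy.1⟩)
      have hA : AnalyticOnNhd ℝ f Set.univ := fun x _ => hf x
      have heq : Set.EqOn f 0 Set.univ :=
        hA.eqOn_zero_of_preconnected_of_frequently_eq_zero
          isPreconnected_univ (Set.mem_univ x) hfreq
      ext y
      simpa using heq (Set.mem_univ y)
end
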